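/- Let n ≥ 0 be an integer, let q_{2n+1}(t) = (1−t²) P′_{2n+1}(t) / P′_{2n+1}(0) (a polynomial of degree 2n+2), and define A(z) = Σ_{k=0}^{n+1} (−1)^k z^{2n+2−2k} q_{2n+1}^{(2k)}(0), B(z) = Σ_{k=0}^{n+1} (−1)^k z^{2n+2−2k} q_{2n+1}^{(2k)}(1), C(z) = Σ_{k=0}^{n} (−1)^{k+1} z^{2n+1−2k} q_{2n+1}^{(2k+1)}(1). Then for every real z, A(z) − B(z) cos z − C(z) sin z = z^{2n+3} ∫₀¹ sin(zt) q_{2n+1}(t) dt. -/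

import Mathlib

open Real Polynomial

/-!
Integrate by parts against `sin (z t)` and `cos (z t)` alternately: each pair of steps trades a
factor `z ^ 2` for two derivatives of the polynomial and leaves boundary terms at `0` and `1`.
Keeping the factors of `z` on the left makes every step valid at `z = 0` as well. Since `q` has
degree `2 n + 2`, its `(2 n + 3)`-rd derivative vanishes, so after `n + 1` pairs the remainder
integral is zero and the boundary terms are exactly `A z - B z cos z - C z sin z`.
-/

/-- The Legendre polynomial of degree `m`, given by its explicit formula. -/
noncomputable def legendreP (m : ℕ) : Polynomial ℝ :=
  Polynomial.C (((2 : ℝ) ^ m)⁻¹) *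
    ∑ k ∈ Finset.range (m / 2 + 1),
      Polynomial.C ((-1 : ℝ) ^ k * (Nat.factorial (2 * m - 2 * k) : ℝ) /
          ((Nat.factorial k : ℝ) * (Nat.factorial (m - k) : ℝ) *
            (Nat.factorial (m - 2 * k) : ℝ))) *
        Polynomial.X ^ (m - 2 * k)

theorem natDegree_legendreP_le (m : ℕ) : (legendreP m).natDegree ≤ m :=
  (natDegree_C_mul_le _ _).trans <| natDegree_sum_le_of_forall_le _ _ fun _ _ =>
    (natDegree_C_mul_le _ _).trans <| (natDegree_X_pow_le _).trans (Nat.sub_le _ _)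

theorem natDegree_one_sub_X_sq_mul_derivative_legendreP_le (n : ℕ) :
    ((1 - X ^ 2) * derivative (legendreP (2 * n + 1))).natDegree ≤ 2 * n + 2 := by
  have h1 : (1 - X ^ 2 : ℝ[X]).natDegree ≤ 2 := by compute_degree
  have h2 := (natDegree_derivative_le (legendreP (2 * n + 1))).trans
    (Nat.sub_le_sub_right (natDegree_legendreP_le _) 1)
  refine natDegree_mul_le.trans ?_
  omega

theorem mul_integral_sin_mul_eval (p : ℝ[X]) (z a b : ℝ) :
    z * ∫ t in a..b, sin (z * t) * p.eval t =
      cos (z * a) * p.eval a - cos (z * b) * p.eval b +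
        ∫ t in a..b, cos (z * t) * (derivative p).eval t := by
  have hv (t : ℝ) : HasDerivAt (fun t => -cos (z * t)) (sin (z * t) * z) t := by
    simpa using (((hasDerivAt_id t).const_mul z).cos).fun_neg
  have ibp := intervalIntegral.integral_mul_deriv_eq_deriv_mul (fun t _ => p.hasDerivAt t)
    (fun t _ => hv t) ((derivative p).continuous.intervalIntegrable a b)
    ((by fun_prop : Continuous fun t => sin (z * t) * z).intervalIntegrable a b)
  rw [← intervalIntegral.integral_const_mul]
  simp only [mul_neg, intervalIntegral.integral_neg] at ibp
  rw [show (fun t => z * (sin (z * t) * p.eval t)) = fun t => p.eval t * (sin (z * t) * z) by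
    ext; ring, ibp]
  simp only [mul_comm (cos _)]
  ring

theorem mul_integral_cos_mul_eval (p : ℝ[X]) (z a b : ℝ) :
    z * ∫ t in a..b, cos (z * t) * p.eval t =
      sin (z * b) * p.eval b - sin (z * a) * p.eval a -
        ∫ t in a..b, sin (z * t) * (derivative p).eval t := by
  have hv (t : ℝ) : HasDerivAt (fun t => sin (z * t)) (cos (z * t) * z) t := by
    simpa using ((hasDerivAt_id t).const_mul z).sin
  have ibp := intervalIntegral.integral_mul_deriv_eq_deriv_mul (fun t _ => p.hasDerivAt t)
    (fun t _ => hv t) ((derivative p).continuous.intervalIntegrable a b)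
    ((by fun_prop : Continuous fun t => cos (z * t) * z).intervalIntegrable a b)
  rw [← intervalIntegral.integral_const_mul]
  rw [show (fun t => z * (cos (z * t) * p.eval t)) = fun t => p.eval t * (cos (z * t) * z) by
    ext; ring, ibp]
  simp only [mul_comm (sin _)]

theorem pow_mul_integral_sin_mul_eval (p : ℝ[X]) (z : ℝ) (m : ℕ) :
    z ^ (2 * m + 1) * ∫ t in (0 : ℝ)..1, sin (z * t) * p.eval t =
      ∑ k ∈ Finset.range (m + 1), (-1) ^ k * z ^ (2 * m - 2 * k) * (derivative^[2 * k] p).eval 0 -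
        (∑ k ∈ Finset.range (m + 1), (-1) ^ k * z ^ (2 * m - 2 * k) *
          (derivative^[2 * k] p).eval 1) * cos z +
        (∑ k ∈ Finset.range m, (-1) ^ k * z ^ (2 * m - 1 - 2 * k) *
          (derivative^[2 * k + 1] p).eval 1) * sin z +
        (-1) ^ m * ∫ t in (0 : ℝ)..1, cos (z * t) * (derivative^[2 * m + 1] p).eval t := by
  induction m with
  | zero => simpa [mul_comm (cos z)] using mul_integral_sin_mul_eval p z 0 1
  | succ m ih =>
    have hEven (x : ℝ) : ∑ k ∈ Finset.range (m + 2), (-1) ^ k * z ^ (2 * (m + 1) - 2 * k) *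
        (derivative^[2 * k] p).eval x =
        z ^ 2 * ∑ k ∈ Finset.range (m + 1), (-1) ^ k * z ^ (2 * m - 2 * k) *
          (derivative^[2 * k] p).eval x + (-1) ^ (m + 1) * (derivative^[2 * m + 2] p).eval x := by
      rw [Finset.sum_range_succ, Finset.mul_sum, Nat.sub_self, pow_zero, mul_one]
      congr 1
      refine Finset.sum_congr rfl fun k hk => ?_
      rw [show 2 * (m + 1) - 2 * k = 2 + (2 * m - 2 * k) by simp at hk; omega, pow_add]
      ring
    have hOdd : ∑ k ∈ Finset.range (m + 1), (-1) ^ k * z ^ (2 * (m + 1) - 1 - 2 * k) *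
        (derivative^[2 * k + 1] p).eval 1 =
        z ^ 2 * ∑ k ∈ Finset.range m, (-1) ^ k * z ^ (2 * m - 1 - 2 * k) *
          (derivative^[2 * k + 1] p).eval 1 + (-1) ^ m * z * (derivative^[2 * m + 1] p).eval 1 := by
      rw [Finset.sum_range_succ, Finset.mul_sum, show 2 * (m + 1) - 1 - 2 * m = 1 by omega,
        pow_one]
      congr 1
      refine Finset.sum_congr rfl fun k hk => ?_
      rw [show 2 * (m + 1) - 1 - 2 * k = 2 + (2 * m - 1 - 2 * k) by simp at hk; omega, pow_add]
      ring
    have hJ : z * ∫ t in (0 : ℝ)..1, cos (z * t) * (derivative^[2 * m + 1] p).eval t =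
        sin z * (derivative^[2 * m + 1] p).eval 1 -
          ∫ t in (0 : ℝ)..1, sin (z * t) * (derivative^[2 * m + 2] p).eval t := by
      simpa only [mul_zero, mul_one, zero_mul, one_mul, sub_zero, cos_zero, sin_zero,
        ← Function.iterate_succ_apply' derivative] using
        mul_integral_cos_mul_eval (derivative^[2 * m + 1] p) z 0 1
    have hI : z * ∫ t in (0 : ℝ)..1, sin (z * t) * (derivative^[2 * m + 2] p).eval t =
        (derivative^[2 * m + 2] p).eval 0 - cos z * (derivative^[2 * m + 2] p).eval 1 +
          ∫ t in (0 : ℝ)..1, cos (z * t) * (derivative^[2 * (m + 1) + 1] p).eval t := by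
      have h := mul_integral_sin_mul_eval (derivative^[2 * m + 2] p) z 0 1
      simp only [mul_zero, mul_one, one_mul, cos_zero, ← Function.iterate_succ_apply'] at h
      exact h
    rw [hEven, hEven, hOdd, show z ^ (2 * (m + 1) + 1) = z ^ 2 * z ^ (2 * m + 1) by ring, mul_assoc, ih]
    linear_combination (-1) ^ m * z * hJ - (-1) ^ m * hI

theorem stmt9 (n : ℕ)
    (q : Polynomial ℝ)
    (hq : q = Polynomial.C (((Polynomial.derivative (legendreP (2 * n + 1))).eval 0)⁻¹) *
      ((1 - Polynomial.X ^ 2) * Polynomial.derivative (legendreP (2 * n + 1))))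
    (A B C : ℝ → ℝ)
    (hA : A = fun z => ∑ k ∈ Finset.range (n + 2),
      (-1 : ℝ) ^ k * z ^ (2 * n + 2 - 2 * k) * (Polynomial.derivative^[2 * k] q).eval 0)
    (hB : B = fun z => ∑ k ∈ Finset.range (n + 2),
      (-1 : ℝ) ^ k * z ^ (2 * n + 2 - 2 * k) * (Polynomial.derivative^[2 * k] q).eval 1)
    (hC : C = fun z => ∑ k ∈ Finset.range (n + 1),
      (-1 : ℝ) ^ (k + 1) * z ^ (2 * n + 1 - 2 * k) * (Polynomial.derivative^[2 * k + 1] q).eval 1) :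
    ∀ z : ℝ, A z - B z * Real.cos z - C z * Real.sin z =
      z ^ (2 * n + 3) * ∫ t in (0:ℝ)..1, Real.sin (z * t) * q.eval t := by
  intro z
  have hdeg : q.natDegree < 2 * (n + 1) + 1 := by
    have := natDegree_one_sub_X_sq_mul_derivative_legendreP_le n
    rw [hq]
    exact (natDegree_C_mul_le _ _).trans_lt (by omega)
  have h := pow_mul_integral_sin_mul_eval q z (n + 1)
  rw [iterate_derivative_eq_zero hdeg] at h
  simp only [eval_zero, mul_zero, intervalIntegral.integral_zero, add_zero] at h
  subst hA hB hC
  rw [show 2 * n + 3 = 2 * (n + 1) + 1 by ring, h]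
  simp only [mul_add_one]
  have hsin : -∑ k ∈ Finset.range (n + 1), (-1 : ℝ) ^ (k + 1) * z ^ (2 * n + 1 - 2 * k) *
      (derivative^[2 * k + 1] q).eval 1 = ∑ k ∈ Finset.range (n + 1), (-1) ^ k *
        z ^ (2 * n + 2 - 1 - 2 * k) * (derivative^[2 * k + 1] q).eval 1 := by
    rw [← Finset.sum_neg_distrib]
    refine Finset.sum_congr rfl fun k _ => ?_
    rw [show 2 * n + 2 - 1 - 2 * k = 2 * n + 1 - 2 * k by omega]
    ring
  linear_combination sin z * hsin
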